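/- If A and B are bounded self-adjoint operators on a complex Hilbert space, then ‖A + B‖ ≤ √(ω(A + iB)² + 2‖A‖‖B‖) ≤ ‖A‖ + ‖B‖. -/

import Mathlib

open scoped InnerProductSpace
open ContinuousLinearMap

variable {H : Type*} [NormedAddCommGroup H] [InnerProductSpace ℂ H] [CompleteSpace H]

/-- The numerical radius of a bounded operator. -/
noncomputable def numRadius (T : H →L[ℂ] H) : ℝ :=
  ⨆ x : {x : H // ‖x‖ = 1}, ‖⟪T x.1, x.1⟫_ℂ‖

/-- The absolute value |A| = (A*A)^(1/2). -/
noncomputable def opAbs (A : H →L[ℂ] H) : H →L[ℂ] H := CFC.sqrt (adjoint A * A)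

/-- Real part of the Cartesian decomposition. -/
noncomputable def reP (T : H →L[ℂ] H) : H →L[ℂ] H := (2:ℂ)⁻¹ • (T + adjoint T)

/-- Imaginary part of the Cartesian decomposition. -/
noncomputable def imP (T : H →L[ℂ] H) : H →L[ℂ] H := (2*Complex.I:ℂ)⁻¹ • (T - adjoint T)

/-!
For a unit vector `x` the numbers `a = ⟪A x, x⟫` and `b = ⟪B x, x⟫` are real, so
`|⟪(A + iB) x, x⟫|² = a² + b² ≤ ω(A + iB)²`, while `|a| ≤ ‖A‖` and `|b| ≤ ‖B‖`. Hence
`(a + b)² ≤ ω(A + iB)² + 2‖A‖‖B‖`, and the norm of the self-adjoint operator `A + B` is the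
supremum of `|a + b|`. The same bounds give `ω(A + iB)² ≤ ‖A‖² + ‖B‖²`, which is the second
inequality.
-/

section RCLike

variable {𝕜 E : Type*} [RCLike 𝕜] [NormedAddCommGroup E] [InnerProductSpace 𝕜 E]

theorem ContinuousLinearMap.rayleighQuotient_of_norm_eq_one (T : E →L[𝕜] E) {x : E}
    (hx : ‖x‖ = 1) : T.rayleighQuotient x = RCLike.re ⟪T x, x⟫_𝕜 := by
  rw [rayleighQuotient, hx, one_pow, div_one, reApplyInnerSelf_apply]

end RCLike

section NumericalRadius

variable {E : Type*} [NormedAddCommGroup E] [InnerProductSpace ℂ E]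

theorem norm_inner_apply_self_le_opNorm (T : E →L[ℂ] E) {x : E} (hx : ‖x‖ = 1) :
    ‖⟪T x, x⟫_ℂ‖ ≤ ‖T‖ :=
  calc ‖⟪T x, x⟫_ℂ‖ ≤ ‖T x‖ * ‖x‖ := norm_inner_le_norm _ _
    _ ≤ ‖T‖ * ‖x‖ * ‖x‖ := by gcongr; exact T.le_opNorm x
    _ = ‖T‖ := by simp [hx]

theorem norm_inner_apply_self_le_numRadius (T : E →L[ℂ] E) {x : E} (hx : ‖x‖ = 1) :
    ‖⟪T x, x⟫_ℂ‖ ≤ numRadius T := by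
  refine le_ciSup (f := fun x : {x : E // ‖x‖ = 1} ↦ ‖⟪T x.1, x.1⟫_ℂ‖) ⟨‖T‖, ?_⟩ ⟨x, hx⟩
  rintro _ ⟨y, rfl⟩
  exact norm_inner_apply_self_le_opNorm T y.2

theorem numRadius_nonneg (T : E →L[ℂ] E) : 0 ≤ numRadius T :=
  Real.iSup_nonneg fun _ ↦ norm_nonneg _

theorem numRadius_le {T : E →L[ℂ] E} {M : ℝ} (hM : 0 ≤ M)
    (h : ∀ x : E, ‖x‖ = 1 → ‖⟪T x, x⟫_ℂ‖ ≤ M) : numRadius T ≤ M :=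
  Real.iSup_le (fun x ↦ h x.1 x.2) hM

theorem norm_inner_add_I_smul_apply_self_sq {A B : E →L[ℂ] E} (hA : (A : E →ₗ[ℂ] E).IsSymmetric)
    (hB : (B : E →ₗ[ℂ] E).IsSymmetric) (x : E) :
    ‖⟪(A + Complex.I • B) x, x⟫_ℂ‖ ^ 2 = (⟪A x, x⟫_ℂ).re ^ 2 + (⟪B x, x⟫_ℂ).re ^ 2 := by
  have hAx : (⟪A x, x⟫_ℂ).im = 0 := hA.im_inner_apply_self x
  have hBx : (⟪B x, x⟫_ℂ).im = 0 := hB.im_inner_apply_self x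
  have hform : ⟪(A + Complex.I • B) x, x⟫_ℂ = ⟨(⟪A x, x⟫_ℂ).re, -(⟪B x, x⟫_ℂ).re⟩ := by
    rw [add_apply, smul_apply, inner_add_left, inner_smul_left]
    apply Complex.ext <;> simp [hAx, hBx]
  rw [hform, Complex.sq_norm, Complex.normSq_mk]
  ring

theorem rayleighQuotient_sq_add_sq_le_numRadius_sq {A B : E →L[ℂ] E}
    (hA : (A : E →ₗ[ℂ] E).IsSymmetric) (hB : (B : E →ₗ[ℂ] E).IsSymmetric) (x : E) :
    A.rayleighQuotient x ^ 2 + B.rayleighQuotient x ^ 2 ≤ numRadius (A + Complex.I • B) ^ 2 := by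
  rcases eq_or_ne x 0 with rfl | hx
  · simpa using sq_nonneg _
  set u : E := ((‖x‖⁻¹ : ℝ) : ℂ) • x
  have hu : ‖u‖ = 1 := by simp [u, norm_smul, hx]
  have hux : ((‖x‖⁻¹ : ℝ) : ℂ) ≠ 0 := by simp [hx]
  rw [← A.rayleigh_smul x hux, ← B.rayleigh_smul x hux, A.rayleighQuotient_of_norm_eq_one hu,
    B.rayleighQuotient_of_norm_eq_one hu, RCLike.re_to_complex, RCLike.re_to_complex,
    ← norm_inner_add_I_smul_apply_self_sq hA hB]
  gcongr
  exact norm_inner_apply_self_le_numRadius _ hu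

theorem numRadius_add_I_smul_sq_le {A B : E →L[ℂ] E} (hA : (A : E →ₗ[ℂ] E).IsSymmetric)
    (hB : (B : E →ₗ[ℂ] E).IsSymmetric) :
    numRadius (A + Complex.I • B) ^ 2 ≤ ‖A‖ ^ 2 + ‖B‖ ^ 2 := by
  have hS : 0 ≤ ‖A‖ ^ 2 + ‖B‖ ^ 2 := by positivity
  rw [← Real.le_sqrt (numRadius_nonneg _) hS]
  refine numRadius_le (Real.sqrt_nonneg _) fun x hx ↦ ?_
  rw [Real.le_sqrt (norm_nonneg _) hS, norm_inner_add_I_smul_apply_self_sq hA hB]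
  have ha := A.rayleighQuotient_le_norm x
  have hb := B.rayleighQuotient_le_norm x
  rw [A.rayleighQuotient_of_norm_eq_one hx, RCLike.re_to_complex] at ha
  rw [B.rayleighQuotient_of_norm_eq_one hx, RCLike.re_to_complex] at hb
  exact add_le_add (sq_le_sq' (abs_le.mp ha).1 (abs_le.mp ha).2)
    (sq_le_sq' (abs_le.mp hb).1 (abs_le.mp hb).2)

end NumericalRadius

theorem stmt_14 (A B : H →L[ℂ] H) (hA : IsSelfAdjoint A) (hB : IsSelfAdjoint B) :
    ‖A + B‖ ≤ Real.sqrt (numRadius (A + Complex.I • B) ^ 2 + 2 * ‖A‖ * ‖B‖) ∧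
      Real.sqrt (numRadius (A + Complex.I • B) ^ 2 + 2 * ‖A‖ * ‖B‖) ≤ ‖A‖ + ‖B‖ := by
  constructor
  · rw [norm_eq_iSup_rayleighQuotient _ (hA.add hB).isSymmetric]
    refine ciSup_le fun x ↦ Real.abs_le_sqrt ?_
    set a := A.rayleighQuotient x
    set b := B.rayleighQuotient x
    have hab : a * b ≤ ‖A‖ * ‖B‖ := calc
      a * b ≤ |a| * |b| := abs_mul a b ▸ le_abs_self _
      _ ≤ ‖A‖ * ‖B‖ := mul_le_mul (A.rayleighQuotient_le_norm x)
        (B.rayleighQuotient_le_norm x) (abs_nonneg _) (norm_nonneg _)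
    rw [rayleighQuotient_add]
    nlinarith [rayleighQuotient_sq_add_sq_le_numRadius_sq hA.isSymmetric hB.isSymmetric x]
  · rw [Real.sqrt_le_iff]
    refine ⟨by positivity, ?_⟩
    nlinarith [numRadius_add_I_smul_sq_le hA.isSymmetric hB.isSymmetric]
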